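/- For every real number p with 0 ≤ p ≤ 1, min{p, 1 − p} ≤ (1/2) · ( −p·log₂ p − (1−p)·log₂(1−p) ), i.e., min{p, 1−p} ≤ (1/2)·H_b(p). -/

import Mathlib

/-! In nats, `H(p) = Real.binEntropy p` is concave on `[0, 1]` with `H 0 = 0` and `H (1/2) = log 2`,
so on `[0, 1/2]` it lies above the chord `p ↦ 2 log 2 · p`; the symmetry `H (1 - p) = H p` covers
`[1/2, 1]`. Dividing by `log 2` converts to bits. -/

open Real

lemma neg_mul_logb_two_sub_eq_binEntropy_div (p : ℝ) :
    -(p * logb 2 p) - (1 - p) * logb 2 (1 - p) = binEntropy p / log 2 := by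
  rw [binEntropy, logb, logb, log_inv, log_inv]
  ring

lemma two_mul_log_two_mul_le_binEntropy {p : ℝ} (h0 : 0 ≤ p) (h1 : p ≤ 2⁻¹) :
    2 * log 2 * p ≤ binEntropy p := by
  have hchord := strictConcave_binEntropy.concaveOn.2
    (show (0 : ℝ) ∈ Set.Icc 0 1 by norm_num) (show (2 : ℝ)⁻¹ ∈ Set.Icc 0 1 by norm_num)
    (show 0 ≤ 1 - 2 * p by linarith) (show 0 ≤ 2 * p by linarith) (by ring)
  simp only [smul_eq_mul, mul_zero, zero_add, binEntropy_zero, binEntropy_two_inv] at hchord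
  rw [show 2 * p * 2⁻¹ = p by ring] at hchord
  linarith

lemma two_mul_log_two_mul_min_le_binEntropy {p : ℝ} (h0 : 0 ≤ p) (h1 : p ≤ 1) :
    2 * log 2 * min p (1 - p) ≤ binEntropy p := by
  rcases le_total p 2⁻¹ with hp | hp
  · rw [min_eq_left (by linarith)]
    exact two_mul_log_two_mul_le_binEntropy h0 hp
  · rw [min_eq_right (by linarith), ← binEntropy_one_sub p]
    exact two_mul_log_two_mul_le_binEntropy (by linarith) (by linarith)

/-- For every real `p` with `0 ≤ p ≤ 1`,
`min {p, 1 − p} ≤ (1/2) · (−p log₂ p − (1 − p) log₂ (1 − p)) = (1/2) · H_b(p)`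
(with the convention `0 · log₂ 0 = 0`, which agrees with Lean's `Real.logb 2 0 = 0`). -/
theorem min_le_half_binEntropy (p : ℝ) (h0 : 0 ≤ p) (h1 : p ≤ 1) :
    min p (1 - p) ≤
      (1 / 2) * (-(p * Real.logb 2 p) - (1 - p) * Real.logb 2 (1 - p)) := by
  have hlog : 0 < 2 * log 2 := by positivity
  rw [neg_mul_logb_two_sub_eq_binEntropy_div, show 1 / 2 * (binEntropy p / log 2)
      = binEntropy p / (2 * log 2) by ring, le_div_iff₀ hlog, mul_comm]
  exact two_mul_log_two_mul_min_le_binEntropy h0 h1
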